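/- Let $M$ be a topological space with a multiplication $\mu : M \times M \to M$ continuous, admitting a two-sided unit $m \in M$ (i.e. $\mu(m,x) = \mu(x,m) = x$ for all $x$). If $M$ is path-connected, then the fundamental group $\pi_1(M, m)$ is abelian. -/

import Mathlib

/-!
Multiplying loops pointwise with `μ` respects homotopy, so it descends to a binary operation on
`π₁(M, m)`. Because `m` is a strict two-sided unit, the constant loop is a unit for it, and
because both operations act pointwise in time, it satisfies the interchange law with
concatenation.
The Eckmann–Hilton argument then makes concatenation commutative.
-/

namespace Path.Homotopic.Quotient

section

variable {X Y Z : Type*} [TopologicalSpace X] [TopologicalSpace Y] [TopologicalSpace Z]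

theorem map_trans {x₀ x₁ x₂ : X} (p : Homotopic.Quotient x₀ x₁)
    (q : Homotopic.Quotient x₁ x₂) (f : C(X, Y)) :
    (p.trans q).map f = (p.map f).trans (q.map f) := by
  induction p, q using Quotient.ind₂ with
  | mk p q => exact congrArg mk (p.map_trans q f.continuous)

theorem cast_trans {x₀ x₁ x₂ y₀ y₁ y₂ : X} (p : Homotopic.Quotient x₀ x₁)
    (q : Homotopic.Quotient x₁ x₂) (h₀ : y₀ = x₀) (h₁ : y₁ = x₁) (h₂ : y₂ = x₂) :
    (p.trans q).cast h₀ h₂ = (p.cast h₀ h₁).trans (q.cast h₁ h₂) := by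
  induction p, q using Quotient.ind₂ with
  | mk p q => exact congrArg mk (p.cast_trans q h₀ h₁ h₂)

/-- The class of the path `t ↦ f (p t, q t)`. -/
def map₂ (f : C(X × Y, Z)) {x₀ x₁ : X} {y₀ y₁ : Y} (p : Homotopic.Quotient x₀ x₁)
    (q : Homotopic.Quotient y₀ y₁) : Homotopic.Quotient (f (x₀, y₀)) (f (x₁, y₁)) :=
  (prod p q).map f

theorem map₂_trans (f : C(X × Y, Z)) {x₀ x₁ x₂ : X} {y₀ y₁ y₂ : Y}
    (p : Homotopic.Quotient x₀ x₁) (p' : Homotopic.Quotient x₁ x₂)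
    (q : Homotopic.Quotient y₀ y₁) (q' : Homotopic.Quotient y₁ y₂) :
    map₂ f (p.trans p') (q.trans q') = (map₂ f p q).trans (map₂ f p' q') := by
  simp only [Homotopic.Quotient.map₂, ← comp_prod_eq_prod_comp, map_trans]

end

section

variable {X : Type*} [TopologicalSpace X] (f : C(X × X, X)) {e : X}

def loopMul (he : f (e, e) = e) (p q : Homotopic.Quotient e e) : Homotopic.Quotient e e :=
  (map₂ f p q).cast he.symm he.symm

theorem loopMul_trans (he : f (e, e) = e) (p p' q q' : Homotopic.Quotient e e) :
    loopMul f he (p.trans p') (q.trans q') = (loopMul f he p q).trans (loopMul f he p' q') := by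
  unfold loopMul
  rw [map₂_trans, cast_trans _ _ _ he.symm]

theorem isUnital_loopMul (hleft : ∀ x, f (e, x) = x) (hright : ∀ x, f (x, e) = x) :
    EckmannHilton.IsUnital (loopMul f (hleft e)) (refl e) where
  left_id q := by
    induction q using Quotient.ind with
    | mk q => exact congrArg mk (by ext t; exact hleft (q t))
  right_id q := by
    induction q using Quotient.ind with
    | mk q => exact congrArg mk (by ext t; exact hright (q t))

theorem isUnital_trans (x : X) :
    EckmannHilton.IsUnital
      (trans : Homotopic.Quotient x x → Homotopic.Quotient x x → Homotopic.Quotient x x)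
      (refl x) where
  left_id := refl_trans
  right_id := trans_refl

theorem trans_comm_of_unital (hleft : ∀ x, f (e, x) = x) (hright : ∀ x, f (x, e) = x)
    (p q : Homotopic.Quotient e e) : p.trans q = q.trans p :=
  (EckmannHilton.mul_comm (isUnital_loopMul f hleft hright) (isUnital_trans e)
    (loopMul_trans f (hleft e))).comm p q

end

end Path.Homotopic.Quotient

theorem fundamentalGroup_comm_of_hspace_general
    (M : Type*) [TopologicalSpace M]
    (μ : M × M → M) (hμ : Continuous μ) (m : M)
    (hunit : ∀ x : M, μ (m, x) = x ∧ μ (x, m) = x) :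
    ∀ a b : FundamentalGroup M m, a * b = b * a := fun a b =>
  Path.Homotopic.Quotient.trans_comm_of_unital ⟨μ, hμ⟩ (fun x => (hunit x).1)
    (fun x => (hunit x).2) b a

/-- If `M` is a path-connected topological space with a continuous multiplication
`μ : M × M → M` admitting a strict two-sided unit `m`, then the fundamental
group `π₁(M, m)` is abelian. -/
theorem fundamentalGroup_comm_of_hspace
    (M : Type*) [TopologicalSpace M] [PathConnectedSpace M]
    (μ : M × M → M) (hμ : Continuous μ) (m : M)
    (hunit : ∀ x : M, μ (m, x) = x ∧ μ (x, m) = x) :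
    ∀ a b : FundamentalGroup M m, a * b = b * a :=
  fundamentalGroup_comm_of_hspace_general M μ hμ m hunit
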